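/- arXiv:2406.14577 — 5 statements merged into one kernel-verified Lean document; each statement's English description precedes it below -/
import Mathlib

section
/- Let g and h be Lie triple systems and (ω,θ,ρ) a non-abelian 3-cocycle on g with values in h. Then the trilinear bracket on g⊕h defined by [x+a,y+b,z+c] = [x,y,z]_g + ω(x,y,z) + D_θ(x,y)c + θ(y,z)a − θ(x,z)b + D_ρ(z)(a,b) + ρ(x)(b,c) − ρ(y)(a,c) + [a,b,c]_h makes g⊕h a Lie triple system. -/
/-!
The bracket is additive in each argument, hence so is the defect
`[p, q, [u, v, w]] - [[p, q, u], v, w] - [u, [p, q, v], w] - [u, v, [p, q, w]]`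
of the fundamental identity, and it suffices to check that the defect vanishes when each argument
lies in `g` or in `h`. The defect is antisymmetric in `p, q`, so `(p, q)` may be taken in
`g × g`, `g × h` or `h × h`. In each of the resulting 24 cases the `g`-component of the defect is
the fundamental identity of `g`, and its `h`-component is one of the cocycle identities, sometimes
antisymmetrized and combined with the antisymmetry and cyclicity of `[·, ·, ·]_h`.
-/


universe u v w

/-- A Lie triple system over a field `k`. -/
structure LTS (k : Type u) (V : Type v) [Field k] [AddCommGroup V] [Module k V] where
  t : V →ₗ[k] V →ₗ[k] V →ₗ[k] V
  alt : ∀ x y, t x x y = 0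
  cyc : ∀ x y z, t x y z + t y z x + t z x y = 0
  leib : ∀ a b x y z, t a b (t x y z) =
    t (t a b x) y z + t x (t a b y) z + t x y (t a b z)

/-- `D_θ(x,y) a = θ(y,x) a - θ(x,y) a`. -/
def Dmap {G H : Type*} [AddCommGroup H] (θ : G → G → H → H) (x y : G) (a : H) : H :=
  θ y x a - θ x y a

/-- `D_ρ(x)(a,b) = ρ(x)(b,a) - ρ(x)(a,b)`. -/
def Drho {G H : Type*} [AddCommGroup H] (ρ : G → H → H → H) (x : G) (a b : H) : H :=
  ρ x b a - ρ x a b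

/-- A non-abelian 3-cocycle on `g` with values in `h`: identities (3.2)–(3.14) of the paper,
together with the wedge conditions on `ω`, `θ`, `ρ`. -/
def IsNACocycle {G H : Type*} [AddCommGroup H]
    (tg : G → G → G → G) (th : H → H → H → H)
    (ω : G → G → G → H) (θ : G → G → H → H) (ρ : G → H → H → H) : Prop :=
  (∀ x y, ω x x y = 0) ∧
  (∀ x a, θ x x a = 0) ∧
  (∀ x a, ρ x a a = 0) ∧
  (∀ x y z, ω x y z + ω y z x + ω z x y = 0) ∧
  (∀ x1 x2 y1 y2 y3,
    Dmap θ x1 x2 (ω y1 y2 y3) + ω x1 x2 (tg y1 y2 y3) =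
      ω (tg x1 x2 y1) y2 y3 + θ y2 y3 (ω x1 x2 y1)
      + ω y1 (tg x1 x2 y2) y3 - θ y1 y3 (ω x1 x2 y2)
      + ω y1 y2 (tg x1 x2 y3) + Dmap θ y1 y2 (ω x1 x2 y3)) ∧
  (∀ x y z w a,
    Dmap θ x y (θ z w a) - θ z w (Dmap θ x y a) =
      θ (tg x y z) w a + θ z (tg x y w) a
      - Drho ρ w (ω x y z) a - ρ z a (ω x y w)) ∧
  (∀ x y z w a,
    θ x (tg y z w) a - ρ x a (ω y z w) =
      θ z w (θ x y a) - θ y w (θ x z a) + Dmap θ y z (θ x w a)) ∧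
  (∀ x y z a b,
    Dmap θ x y (ρ z a b) =
      ρ z (Dmap θ x y a) b + ρ (tg x y z) a b + th (ω x y z) a b
      + ρ z a (Dmap θ x y b)) ∧
  (∀ x y z a b,
    Dmap θ y z (ρ x a b) =
      ρ x a (Dmap θ y z b) - ρ z (θ x y a) b + ρ y (θ x z a) b) ∧
  (∀ x y z a b,
    θ y z (ρ x a b) =
      ρ x a (θ y z b) - Drho ρ z (θ x y a) b - ρ y b (θ x z a)) ∧
  (∀ x y a b c,
    Dmap θ x y (th a b c) =
      th (Dmap θ x y a) b c + th a (Dmap θ x y b) c + th a b (Dmap θ x y c)) ∧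
  (∀ x y a b c,
    ρ x a (ρ y b c) =
      ρ y (ρ x a b) c + ρ y b (ρ x a c) - th (θ x y a) b c) ∧
  (∀ x y a b c,
    th a b (θ x y c) =
      θ x y (th a b c) - Drho ρ y (Drho ρ x a b) c - ρ x c (Drho ρ y a b)) ∧
  (∀ x a b c d,
    th a b (ρ x c d) =
      ρ x (th a b c) d - th c (Drho ρ x a b) d + ρ x c (th a b d)) ∧
  (∀ x a b c d,
    ρ x a (th b c d) =
      th (ρ x a b) c d + th b (ρ x a c) d + th b c (ρ x a d))

/-- The bracket `[x+a, y+b, z+c]_{(ω,θ,ρ)}` on `g ⊕ h`. -/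
def nabBr {G H : Type*} [AddCommGroup H]
    (tg : G → G → G → G) (th : H → H → H → H)
    (ω : G → G → G → H) (θ : G → G → H → H) (ρ : G → H → H → H) :
    G × H → G × H → G × H → G × H :=
  fun p q r =>
    (tg p.1 q.1 r.1,
      ω p.1 q.1 r.1 + Dmap θ p.1 q.1 r.2 + θ q.1 r.1 p.2 - θ p.1 r.1 q.2
        + Drho ρ r.1 p.2 q.2 + ρ p.1 q.2 r.2 - ρ q.1 p.2 r.2 + th p.2 q.2 r.2)

/-- Equivalence of two non-abelian 3-cocycles via `φ : g → h`
(equations (3.15)–(3.17) of the paper). -/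
def CocycleEquiv {G H : Type*} [AddCommGroup H]
    (tg : G → G → G → G) (th : H → H → H → H)
    (ω1 : G → G → G → H) (θ1 : G → G → H → H) (ρ1 : G → H → H → H)
    (ω2 : G → G → G → H) (θ2 : G → G → H → H) (ρ2 : G → H → H → H)
    (φ : G → H) : Prop :=
  (∀ x y z,
    ω1 x y z - ω2 x y z =
      θ2 x z (φ y) - Dmap θ2 x y (φ z) + ρ2 x (φ y) (φ z) - θ2 y z (φ x)
        + Drho ρ2 z (φ x) (φ y) - ρ2 y (φ x) (φ z)
        - th (φ x) (φ y) (φ z) + φ (tg x y z)) ∧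
  (∀ x y a,
    θ1 x y a - θ2 x y a =
      ρ2 x a (φ y) - Drho ρ2 y a (φ x) + th a (φ x) (φ y)) ∧
  (∀ x a b, ρ1 x a b - ρ2 x a b = th a (φ x) b)

/-- The operation `i_f(g)` on degree-one cochains (from equations (4.2)–(4.4)). -/
def ibrack {M : Type*} [AddCommGroup M] (f g : M → M → M → M) :
    M → M → M → M → M → M :=
  fun x1 y1 x2 y2 z =>
    f (g x1 y1 x2) y2 z + f x2 (g x1 y1 y2) z
      - (f x1 y1 (g x2 y2 z) - f x2 y2 (g x1 y1 z))

/-- The graded bracket `[f,g]_{Lts} = (-1)^{1·1} i_f(g) - i_g(f)` of two degree-one cochains. -/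
def brLts {M : Type*} [AddCommGroup M] (f g : M → M → M → M) :
    M → M → M → M → M → M :=
  fun x1 y1 x2 y2 z =>
    -(ibrack f g x1 y1 x2 y2 z) - ibrack g f x1 y1 x2 y2 z

/-- Non-abelian 1-cocycles on `g` with values in `h`. -/
def IsZ1 {G H : Type*} [AddCommGroup H]
    (tg : G → G → G → G) (th : H → H → H → H)
    (θ : G → G → H → H) (ρ : G → H → H → H) (φ : G → H) : Prop :=
  (∀ x a b, th a (φ x) b = 0) ∧
  (∀ x y a, th a (φ x) (φ y) - Drho ρ y a (φ x) + ρ x a (φ y) = 0) ∧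
  (∀ x y z,
    Drho ρ z (φ x) (φ y) - ρ y (φ x) (φ z) - θ y z (φ x)
      + ρ x (φ y) (φ z) + θ x z (φ y) - Dmap θ x y (φ z)
      = th (φ x) (φ y) (φ z) - φ (tg x y z))

def Prod.InSummand {M N : Type*} [Zero M] [Zero N] (p : M × N) : Prop := p.2 = 0 ∨ p.1 = 0

theorem Prod.eq_zero_of_map_add {M N P : Type*} [AddZeroClass M] [AddZeroClass N]
    [AddZeroClass P] {f : M × N → P} (h : ∀ p : M × N, p.InSummand → f p = 0)
    (hf : ∀ p q, f (p + q) = f p + f q) (p : M × N) : f p = 0 := by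
  rw [← Prod.fst_add_snd p, hf, h _ (.inl rfl), h _ (.inr rfl), add_zero]

structure IsTriadditive {V : Type*} [Add V] (B : V → V → V → V) : Prop where
  add_left : ∀ p p' q r, B (p + p') q r = B p q r + B p' q r
  add_mid : ∀ p q q' r, B p (q + q') r = B p q r + B p q' r
  add_right : ∀ p q r r', B p q (r + r') = B p q r + B p q r'

def leibnizDefect {V : Type*} [AddCommGroup V] (B : V → V → V → V) (p q u v w : V) : V :=
  B p q (B u v w) - (B (B p q u) v w + B u (B p q v) w + B u v (B p q w))

namespace IsTriadditive

section

variable {V : Type*} [AddCommGroup V] {B : V → V → V → V}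

theorem neg_left (hB : IsTriadditive B) (p q r : V) : B (-p) q r = -B p q r :=
  (AddMonoidHom.mk' (B · q r) (hB.add_left · · q r)).map_neg p

theorem neg_mid (hB : IsTriadditive B) (p q r : V) : B p (-q) r = -B p q r :=
  (AddMonoidHom.mk' (B p · r) (hB.add_mid p · · r)).map_neg q

theorem neg_right (hB : IsTriadditive B) (p q r : V) : B p q (-r) = -B p q r :=
  (AddMonoidHom.mk' (B p q ·) (hB.add_right p q)).map_neg r

theorem swap_of_self (hB : IsTriadditive B) (hself : ∀ p r, B p p r = 0) (p q r : V) :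
    B q p r = -B p q r := by
  have h := hself (p + q) r
  rw [hB.add_left, hB.add_mid, hB.add_mid, hself, hself, zero_add, add_zero] at h
  exact eq_neg_of_add_eq_zero_right h

theorem leibnizDefect_swap (hB : IsTriadditive B) (hself : ∀ p r, B p p r = 0)
    (p q u v w : V) : leibnizDefect B q p u v w = -leibnizDefect B p q u v w := by
  simp only [leibnizDefect, hB.swap_of_self hself q p, hB.neg_left, hB.neg_mid, hB.neg_right]
  abel

end

theorem leibnizDefect_eq_zero {M N : Type*} [AddCommGroup M] [AddCommGroup N]
    {B : M × N → M × N → M × N → M × N} (hB : IsTriadditive B)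
    (h : ∀ p q u v w : M × N, p.InSummand → q.InSummand → u.InSummand → v.InSummand →
      w.InSummand → leibnizDefect B p q u v w = 0)
    (p q u v w : M × N) : leibnizDefect B p q u v w = 0 := by
  refine Prod.eq_zero_of_map_add (f := (leibnizDefect B · q u v w)) (fun p hp => ?_) ?_ p
  refine Prod.eq_zero_of_map_add (f := (leibnizDefect B p · u v w)) (fun q hq => ?_) ?_ q
  refine Prod.eq_zero_of_map_add (f := (leibnizDefect B p q · v w)) (fun u hu => ?_) ?_ u
  refine Prod.eq_zero_of_map_add (f := (leibnizDefect B p q u · w)) (fun v hv => ?_) ?_ v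
  refine Prod.eq_zero_of_map_add (f := (leibnizDefect B p q u v ·))
    (h p q u v · hp hq hu hv) ?_ w
  all_goals
    intro _ _
    simp only [leibnizDefect, hB.add_left, hB.add_mid, hB.add_right]
    abel

end IsTriadditive

section Extension

variable {k G H : Type*} [CommSemiring k] [AddCommGroup G] [Module k G] [AddCommGroup H]
  [Module k H] {tg : G →ₗ[k] G →ₗ[k] G →ₗ[k] G} {th : H →ₗ[k] H →ₗ[k] H →ₗ[k] H}
  {ω : G →ₗ[k] G →ₗ[k] G →ₗ[k] H} {θ : G →ₗ[k] G →ₗ[k] H →ₗ[k] H}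
  {ρ : G →ₗ[k] H →ₗ[k] H →ₗ[k] H}

local notation "B" => nabBr (fun x y z => tg x y z) (fun a b c => th a b c)
  (fun x y z => ω x y z) (fun x y a => θ x y a) (fun x a b => ρ x a b)

theorem nabBr_isTriadditive : IsTriadditive B := by
  constructor <;>
  · intros
    simp only [nabBr, Dmap, Drho, Prod.fst_add, Prod.snd_add, map_add, LinearMap.add_apply,
      Prod.mk_add_mk, Prod.mk.injEq, true_and]
    abel

end Extension

theorem LTS.t_swap {k V : Type*} [Field k] [AddCommGroup V] [Module k V] (L : LTS k V)
    (a b c : V) : L.t b a c = -L.t a b c := by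
  have h := L.alt (a + b) c
  simp only [map_add, LinearMap.add_apply, L.alt] at h
  linear_combination (norm := abel) h

section Cocycle

variable {k G H : Type*} [Field k] [AddCommGroup G] [Module k G] [AddCommGroup H] [Module k H]
  {Lg : LTS k G} {Lh : LTS k H} {ω : G →ₗ[k] G →ₗ[k] G →ₗ[k] H}
  {θ : G →ₗ[k] G →ₗ[k] H →ₗ[k] H} {ρ : G →ₗ[k] H →ₗ[k] H →ₗ[k] H}

local notation "B" => nabBr (fun x y z => Lg.t x y z) (fun a b c => Lh.t a b c)
  (fun x y z => ω x y z) (fun x y a => θ x y a) (fun x a b => ρ x a b)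

local notation "IsCocycle" => IsNACocycle (fun x y z => Lg.t x y z) (fun a b c => Lh.t a b c)
  (fun x y z => ω x y z) (fun x y a => θ x y a) (fun x a b => ρ x a b)

theorem nabBr_self_left (hcoc : IsCocycle) (p q : G × H) : B p p q = 0 := by
  obtain ⟨hω, hθ, -⟩ := hcoc
  simp only [nabBr, Dmap, Drho, Lg.alt, Lh.alt, hω, hθ, Prod.mk_eq_zero, true_and]
  abel

theorem nabBr_cyclic (hcoc : IsCocycle) (p q r : G × H) : B p q r + B q r p + B r p q = 0 := by
  obtain ⟨-, -, -, hω, -⟩ := hcoc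
  simp only [nabBr, Dmap, Drho, Prod.mk_add_mk, Prod.mk_eq_zero, Lg.cyc, true_and]
  linear_combination (norm := abel) hω p.1 q.1 r.1 + Lh.cyc p.2 q.2 r.2

theorem leibnizDefect_nabBr_inl_inl (hcoc : IsCocycle) (x₁ x₂ : G) {u v w : G × H}
    (hu : u.InSummand) (hv : v.InSummand) (hw : w.InSummand) :
    leibnizDefect B (x₁, 0) (x₂, 0) u v w = 0 := by
  obtain ⟨-, -, -, -, hω, hDθθ, -, hDθρ, -, -, hDθth, -, -, -, -⟩ := hcoc
  simp only [Dmap, Drho, map_sub, LinearMap.sub_apply] at hω hDθθ hDθρ hDθth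
  obtain ⟨y₁, b₁⟩ := u
  obtain ⟨y₂, b₂⟩ := v
  obtain ⟨y₃, b₃⟩ := w
  -- one case for each `(u, v, w) ∈ {g, h}³`, in lexicographic order with `g` first
  rcases hu with rfl | rfl <;> rcases hv with rfl | rfl <;> rcases hw with rfl | rfl <;>
    simp only [leibnizDefect, nabBr, Dmap, Drho, map_sub, map_neg, map_zero,
      LinearMap.sub_apply, LinearMap.zero_apply, add_zero, zero_add, sub_zero, zero_sub,
      Prod.mk_add_mk, Prod.mk_sub_mk, Prod.mk_eq_zero, true_and]
  · exact ⟨sub_eq_zero.mpr (Lg.leib x₁ x₂ y₁ y₂ y₃),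
      by linear_combination (norm := abel) hω x₁ x₂ y₁ y₂ y₃⟩
  · linear_combination (norm := abel) hDθθ x₁ x₂ y₂ y₁ b₃ - hDθθ x₁ x₂ y₁ y₂ b₃
  · linear_combination (norm := abel) -hDθθ x₁ x₂ y₁ y₃ b₂
  · linear_combination (norm := abel) hDθρ x₁ x₂ y₁ b₂ b₃
  · linear_combination (norm := abel) hDθθ x₁ x₂ y₂ y₃ b₁
  · linear_combination (norm := abel) -hDθρ x₁ x₂ y₂ b₁ b₃ - Lh.t_swap b₁ (ω x₁ x₂ y₂) b₃
  · linear_combination (norm := abel) hDθρ x₁ x₂ y₃ b₂ b₁ - hDθρ x₁ x₂ y₃ b₁ b₂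
      - Lh.cyc (ω x₁ x₂ y₃) b₁ b₂ + Lh.t_swap (ω x₁ x₂ y₃) b₂ b₁
  · linear_combination (norm := abel) hDθth x₁ x₂ b₁ b₂ b₃

theorem leibnizDefect_nabBr_inl_inr (hcoc : IsCocycle) (x₁ : G) (a₂ : H) {u v w : G × H}
    (hu : u.InSummand) (hv : v.InSummand) (hw : w.InSummand) :
    leibnizDefect B (x₁, 0) (0, a₂) u v w = 0 := by
  obtain ⟨-, -, -, -, -, -, hθω, -, hDθρ', hθρ, hDθth, hρρ, hthθ, -, hρth⟩ := hcoc
  simp only [Dmap, Drho, map_sub, LinearMap.sub_apply] at hθω hDθρ' hθρ hDθth hρρ hthθ hρth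
  obtain ⟨y₁, b₁⟩ := u
  obtain ⟨y₂, b₂⟩ := v
  obtain ⟨y₃, b₃⟩ := w
  rcases hu with rfl | rfl <;> rcases hv with rfl | rfl <;> rcases hw with rfl | rfl <;>
    simp only [leibnizDefect, nabBr, Dmap, Drho, map_sub, map_neg, map_zero,
      LinearMap.neg_apply, LinearMap.zero_apply, add_zero, zero_add, sub_zero, zero_sub,
      Prod.mk_add_mk, Prod.mk_sub_mk, Prod.mk_eq_zero, true_and]
  · linear_combination (norm := abel) -hθω x₁ y₁ y₂ y₃ a₂
  · linear_combination (norm := abel) -hDθρ' x₁ y₁ y₂ a₂ b₃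
  · linear_combination (norm := abel) hθρ x₁ y₁ y₃ a₂ b₂
  · linear_combination (norm := abel) hρρ x₁ y₁ a₂ b₂ b₃
  · linear_combination (norm := abel) -hθρ x₁ y₂ y₃ a₂ b₁
  · linear_combination (norm := abel) -hρρ x₁ y₂ a₂ b₁ b₃ + Lh.t_swap b₁ (θ x₁ y₂ a₂) b₃
  · linear_combination (norm := abel) hρρ x₁ y₃ a₂ b₂ b₁ - hρρ x₁ y₃ a₂ b₁ b₂
      + Lh.cyc (θ x₁ y₃ a₂) b₁ b₂ - Lh.t_swap (θ x₁ y₃ a₂) b₂ b₁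
  · linear_combination (norm := abel) hρth x₁ a₂ b₁ b₂ b₃

theorem leibnizDefect_nabBr_inr_inr (hcoc : IsCocycle) (a₁ a₂ : H) {u v w : G × H}
    (hu : u.InSummand) (hv : v.InSummand) (hw : w.InSummand) :
    leibnizDefect B (0, a₁) (0, a₂) u v w = 0 := by
  obtain ⟨-, -, -, -, -, -, -, hDθρ, -, hθρ, -, -, hthθ, hthρ, -⟩ := hcoc
  simp only [Dmap, Drho, map_sub, LinearMap.sub_apply] at hDθρ hθρ hthθ hthρ
  obtain ⟨y₁, b₁⟩ := u
  obtain ⟨y₂, b₂⟩ := v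
  obtain ⟨y₃, b₃⟩ := w
  rcases hu with rfl | rfl <;> rcases hv with rfl | rfl <;> rcases hw with rfl | rfl <;>
    simp only [leibnizDefect, nabBr, Dmap, Drho, map_sub, map_neg, map_zero,
      LinearMap.sub_apply, LinearMap.zero_apply, add_zero, zero_add, sub_zero, zero_sub,
      Prod.mk_add_mk, Prod.mk_sub_mk, Prod.mk_eq_zero, true_and]
  · linear_combination (norm := abel) hDθρ y₁ y₂ y₃ a₁ a₂ - hDθρ y₁ y₂ y₃ a₂ a₁
      + hθρ y₁ y₂ y₃ a₁ a₂ - hθρ y₁ y₂ y₃ a₂ a₁ + hθρ y₂ y₁ y₃ a₂ a₁ - hθρ y₂ y₁ y₃ a₁ a₂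
      + Lh.cyc (ω y₁ y₂ y₃) a₁ a₂ - Lh.t_swap (ω y₁ y₂ y₃) a₂ a₁
  · linear_combination (norm := abel) -hthθ y₁ y₂ a₁ a₂ b₃ + hthθ y₂ y₁ a₁ a₂ b₃
  · linear_combination (norm := abel) -hthθ y₁ y₃ a₁ a₂ b₂
  · linear_combination (norm := abel) hthρ y₁ a₁ a₂ b₂ b₃ + Lh.t_swap b₂ (ρ y₁ a₁ a₂) b₃
      - Lh.t_swap b₂ (ρ y₁ a₂ a₁) b₃
  · linear_combination (norm := abel) hthθ y₂ y₃ a₁ a₂ b₁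
  · linear_combination (norm := abel) -hthρ y₂ a₁ a₂ b₁ b₃
  · linear_combination (norm := abel) hthρ y₃ a₁ a₂ b₂ b₁ - hthρ y₃ a₁ a₂ b₁ b₂
      + Lh.t_swap b₁ (ρ y₃ a₂ a₁) b₂ - Lh.t_swap b₁ (ρ y₃ a₁ a₂) b₂
      - Lh.cyc b₁ b₂ (ρ y₃ a₂ a₁) + Lh.cyc b₁ b₂ (ρ y₃ a₁ a₂)
  · linear_combination (norm := abel) Lh.leib a₁ a₂ b₁ b₂ b₃

theorem leibnizDefect_nabBr_inr_inl (hcoc : IsCocycle) (a₁ : H) (x₂ : G) {u v w : G × H}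
    (hu : u.InSummand) (hv : v.InSummand) (hw : w.InSummand) :
    leibnizDefect B (0, a₁) (x₂, 0) u v w = 0 := by
  rw [nabBr_isTriadditive.leibnizDefect_swap (nabBr_self_left hcoc),
    leibnizDefect_nabBr_inl_inr hcoc x₂ a₁ hu hv hw, neg_zero]

theorem leibnizDefect_nabBr_eq_zero (hcoc : IsCocycle) (p q u v w : G × H) :
    leibnizDefect B p q u v w = 0 := by
  refine nabBr_isTriadditive.leibnizDefect_eq_zero ?_ p q u v w
  rintro ⟨x₁, a₁⟩ ⟨x₂, a₂⟩ u v w (rfl | rfl) (rfl | rfl) hu hv hw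
  · exact leibnizDefect_nabBr_inl_inl hcoc x₁ x₂ hu hv hw
  · exact leibnizDefect_nabBr_inl_inr hcoc x₁ a₂ hu hv hw
  · exact leibnizDefect_nabBr_inr_inl hcoc a₁ x₂ hu hv hw
  · exact leibnizDefect_nabBr_inr_inr hcoc a₁ a₂ hu hv hw

end Cocycle

/-- if `(ω,θ,ρ)` is a non-abelian 3-cocycle on `g` with values in `h`, then the
bracket `[x+a,y+b,z+c]_{(ω,θ,ρ)}` makes `g ⊕ h` into a Lie triple system. -/
theorem statement3 {k G H : Type*} [Field k] [AddCommGroup G] [Module k G]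
    [AddCommGroup H] [Module k H]
    (Lg : LTS k G) (Lh : LTS k H)
    (ω : G →ₗ[k] G →ₗ[k] G →ₗ[k] H)
    (θ : G →ₗ[k] G →ₗ[k] H →ₗ[k] H)
    (ρ : G →ₗ[k] H →ₗ[k] H →ₗ[k] H)
    (hcoc : IsNACocycle (fun x y z => Lg.t x y z) (fun a b c => Lh.t a b c)
      (fun x y z => ω x y z) (fun x y a => θ x y a) (fun x a b => ρ x a b)) :
    ∀ B : G × H → G × H → G × H → G × H,
      B = nabBr (fun x y z => Lg.t x y z) (fun a b c => Lh.t a b c)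
        (fun x y z => ω x y z) (fun x y a => θ x y a) (fun x a b => ρ x a b) →
      (∀ p q, B p p q = 0) ∧
      (∀ p q r, B p q r + B q r p + B r p q = 0) ∧
      (∀ p q u v w, B p q (B u v w) =
        B (B p q u) v w + B u (B p q v) w + B u v (B p q w)) := by
  rintro B rfl
  exact ⟨nabBr_self_left hcoc, nabBr_cyclic hcoc,
    fun p q u v w => sub_eq_zero.mp (leibnizDefect_nabBr_eq_zero hcoc p q u v w)⟩
end

section
/- Let 0→h→ĝ→g→0 be a non-abelian extension with two sections s₁, s₂ of p, with corresponding non-abelian 3-cocycles (ω₁,θ₁,ρ₁) and (ω₂,θ₂,ρ₂). Then these two 3-cocycles are equivalent via the linear map φ(x)=s₂(x)−s₁(x): g→h. -/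
universe u v w

/-!
Everything is compared inside `E` through the injective map `i`. Substituting
`s₁ = s₂ - i ∘ φ` and expanding the trilinear bracket of `E`, the three defining identities of
an equivalence reduce to skew-symmetry of the bracket in its first two arguments and the
Jacobi identity.
-/

namespace LTS

variable {k V : Type*} [Field k] [AddCommGroup V] [Module k V] (L : LTS k V)

theorem t_swap_s6 (x y z : V) : L.t y x z = -L.t x y z := by
  have h := L.alt (x + y) z
  simp only [map_add, LinearMap.add_apply, L.alt, zero_add, add_zero] at h
  exact eq_neg_of_add_eq_zero_left h

theorem t_eq_rev_sub (x y z : V) : L.t x y z = L.t z y x - L.t z x y := by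
  rw [L.t_swap_s6 y z x]
  linear_combination (norm := abel) L.cyc x y z

theorem t_sub_left (x u a b : V) : L.t (x - u) a b - L.t x a b = L.t a u b := by
  rw [map_sub, LinearMap.sub_apply, LinearMap.sub_apply, L.t_swap_s6 a u b]
  abel

theorem t_sub_sub_right (a x y u v : V) :
    L.t a (x - u) (y - v) - L.t a x y = L.t x a v - (L.t y u a - L.t y a u) + L.t a u v := by
  simp only [map_sub, LinearMap.sub_apply]
  rw [L.t_swap_s6 a x v, L.t_eq_rev_sub a u y]
  abel

theorem t_sub_sub_sub (x y z u v w : V) :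
    L.t (x - u) (y - v) (z - w) - L.t x y z =
      L.t v x z - (L.t w y x - L.t w x y) + L.t x v w - L.t u y z
        + (L.t z v u - L.t z u v) - L.t y u w - L.t u v w := by
  simp only [map_sub, LinearMap.sub_apply]
  rw [L.t_swap_s6 x v z, L.t_swap_s6 y u w, L.t_eq_rev_sub x y w, L.t_eq_rev_sub u v z]
  abel

end LTS

theorem statement6_general {k G H E : Type*} [Field k] [AddCommGroup G] [Module k G]
    [AddCommGroup H] [Module k H] [AddCommGroup E] [Module k E]
    (Lg : LTS k G) (Lh : LTS k H) (LE : LTS k E)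
    (i : H →ₗ[k] E)
    (ihom : ∀ a b c, i (Lh.t a b c) = LE.t (i a) (i b) (i c))
    (iinj : Function.Injective i)
    (s1 s2 : G →ₗ[k] E)
    (ω1 : G → G → G → H) (θ1 : G → G → H → H) (ρ1 : G → H → H → H)
    (hω1 : ∀ x y z, i (ω1 x y z) = LE.t (s1 x) (s1 y) (s1 z) - s1 (Lg.t x y z))
    (hθ1 : ∀ x y a, i (θ1 x y a) = LE.t (i a) (s1 x) (s1 y))
    (hρ1 : ∀ x a b, i (ρ1 x a b) = LE.t (s1 x) (i a) (i b))
    (ω2 : G → G → G → H) (θ2 : G → G → H → H) (ρ2 : G → H → H → H)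
    (hω2 : ∀ x y z, i (ω2 x y z) = LE.t (s2 x) (s2 y) (s2 z) - s2 (Lg.t x y z))
    (hθ2 : ∀ x y a, i (θ2 x y a) = LE.t (i a) (s2 x) (s2 y))
    (hρ2 : ∀ x a b, i (ρ2 x a b) = LE.t (s2 x) (i a) (i b))
    (φ : G → H) (hφ : ∀ x, i (φ x) = s2 x - s1 x) :
    CocycleEquiv (fun x y z => Lg.t x y z) (fun a b c => Lh.t a b c)
      ω1 θ1 ρ1 ω2 θ2 ρ2 φ := by
  have hs1 : ∀ x, s1 x = s2 x - i (φ x) := fun x => by rw [hφ]; abel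
  refine ⟨fun x y z => iinj ?_, fun x y a => iinj ?_, fun x a b => iinj ?_⟩
  · simp only [Dmap, Drho, map_sub i, map_add i, hω1, hω2, hθ2, hρ2, ihom, hs1]
    rw [← LE.t_sub_sub_sub]
    abel
  · simp only [Drho, map_sub i, map_add i, hθ1, hθ2, hρ2, ihom, hs1]
    exact LE.t_sub_sub_right _ _ _ _ _
  · simp only [map_sub i, hρ1, hρ2, ihom, hs1]
    exact LE.t_sub_left _ _ _ _

/-- the non-abelian 3-cocycles `(ω₁,θ₁,ρ₁)` and `(ω₂,θ₂,ρ₂)` induced by two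
sections `s₁, s₂` of the same non-abelian extension are equivalent via `φ(x) = s₂ x - s₁ x`. -/
theorem statement6 {k G H E : Type*} [Field k] [AddCommGroup G] [Module k G]
    [AddCommGroup H] [Module k H] [AddCommGroup E] [Module k E]
    (Lg : LTS k G) (Lh : LTS k H) (LE : LTS k E)
    (i : H →ₗ[k] E) (p : E →ₗ[k] G)
    (ihom : ∀ a b c, i (Lh.t a b c) = LE.t (i a) (i b) (i c))
    (phom : ∀ x y z, p (LE.t x y z) = Lg.t (p x) (p y) (p z))
    (iinj : Function.Injective i) (psurj : Function.Surjective p)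
    (hexact : LinearMap.range i = LinearMap.ker p)
    (s1 s2 : G →ₗ[k] E) (hs1 : ∀ x, p (s1 x) = x) (hs2 : ∀ x, p (s2 x) = x)
    (ω1 : G → G → G → H) (θ1 : G → G → H → H) (ρ1 : G → H → H → H)
    (hω1 : ∀ x y z, i (ω1 x y z) = LE.t (s1 x) (s1 y) (s1 z) - s1 (Lg.t x y z))
    (hθ1 : ∀ x y a, i (θ1 x y a) = LE.t (i a) (s1 x) (s1 y))
    (hρ1 : ∀ x a b, i (ρ1 x a b) = LE.t (s1 x) (i a) (i b))
    (ω2 : G → G → G → H) (θ2 : G → G → H → H) (ρ2 : G → H → H → H)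
    (hω2 : ∀ x y z, i (ω2 x y z) = LE.t (s2 x) (s2 y) (s2 z) - s2 (Lg.t x y z))
    (hθ2 : ∀ x y a, i (θ2 x y a) = LE.t (i a) (s2 x) (s2 y))
    (hρ2 : ∀ x a b, i (ρ2 x a b) = LE.t (s2 x) (i a) (i b))
    (φ : G → H) (hφ : ∀ x, i (φ x) = s2 x - s1 x) :
    CocycleEquiv (fun x y z => Lg.t x y z) (fun a b c => Lh.t a b c)
      ω1 θ1 ρ1 ω2 θ2 ρ2 φ :=
  statement6_general Lg Lh LE i ihom iinj s1 s2 ω1 θ1 ρ1 hω1 hθ1 hρ1 ω2 θ2 ρ2 hω2 hθ2 hρ2 φ hφ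
end

section
/- If two non-abelian 3-cocycles (ω₁,θ₁,ρ₁) and (ω₂,θ₂,ρ₂) on g with values in h are equivalent via φ: g→h, then the map f: g⊕h → g⊕h defined by f(x+a)=x−φ(x)+a is an isomorphism of Lie triple systems from (g⊕h, [.,.,.]_{(ω₁,θ₁,ρ₁)}) to (g⊕h, [.,.,.]_{(ω₂,θ₂,ρ₂)}) that commutes with the inclusion of h and projection onto g. -/
universe u v w

namespace LTS

variable {k V : Type*} [Field k] [AddCommGroup V] [Module k V] (L : LTS k V)

theorem t_swap_s7 (a b c : V) : L.t a b c = -L.t b a c := by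
  have h := L.alt (a + b) c
  simp only [map_add, LinearMap.add_apply, L.alt, zero_add, add_zero] at h
  exact eq_neg_of_add_eq_zero_right h

theorem t_reverse (a b c : V) : L.t c b a = L.t a b c + L.t c a b := by
  have h := L.cyc c b a
  rw [L.t_swap_s7 b a c, L.t_swap_s7 a c b] at h
  rw [← sub_eq_zero, ← h]
  abel

end LTS

def shear {G H : Type*} [Sub H] (φ : G → H) (q : G × H) : G × H := (q.1, q.2 - φ q.1)

theorem shear_bijective {G H : Type*} [AddGroup H] (φ : G → H) : Function.Bijective (shear φ) :=
  Function.bijective_iff_has_inverse.mpr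
    ⟨fun q => (q.1, q.2 + φ q.1), fun q => by simp [shear], fun q => by simp [shear]⟩

theorem shear_nabBr {k G H : Type*} [Field k] [AddCommGroup H] [Module k H]
    (tg : G → G → G → G) (Lh : LTS k H)
    (ω1 ω2 : G → G → G → H) (θ1 : G → G → H → H) (θ2 : G → G → H →ₗ[k] H)
    (ρ1 : G → H → H → H) (ρ2 : G → H →ₗ[k] H →ₗ[k] H) (φ : G → H)
    (hequiv : CocycleEquiv tg (fun a b c => Lh.t a b c) ω1 θ1 ρ1
      ω2 (fun x y a => θ2 x y a) (fun x a b => ρ2 x a b) φ)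
    (q r u : G × H) :
    shear φ (nabBr tg (fun a b c => Lh.t a b c) ω1 θ1 ρ1 q r u) =
      nabBr tg (fun a b c => Lh.t a b c) ω2 (fun x y a => θ2 x y a) (fun x a b => ρ2 x a b)
        (shear φ q) (shear φ r) (shear φ u) := by
  obtain ⟨hω, hθ, hρ⟩ := hequiv
  refine Prod.ext rfl ?_
  simp only [shear, nabBr, Dmap, Drho, fun x y z => eq_add_of_sub_eq' (hω x y z),
    fun x y a => eq_add_of_sub_eq' (hθ x y a), fun x a b => eq_add_of_sub_eq' (hρ x a b),
    map_sub, LinearMap.sub_apply]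
  -- The differences (3.16), (3.17) contribute `[·,·,·]_h`-terms whose arguments are not in the
  -- order `q, r, u` of the expanded right-hand side; skew-symmetry and the cyclic identity fix that.
  rw [Lh.t_reverse (φ q.1) (φ r.1) u.2, Lh.t_reverse q.2 (φ u.1) r.2, Lh.t_swap_s7 r.2 q.2 (φ u.1),
    Lh.t_swap_s7 r.2 (φ q.1) u.2, Lh.t_swap_s7 r.2 (φ q.1) (φ u.1)]
  abel

theorem statement7_general {k G H : Type*} [Field k] [AddCommGroup G] [Module k G]
    [AddCommGroup H] [Module k H]
    (Lg : LTS k G) (Lh : LTS k H)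
    (ω1 : G →ₗ[k] G →ₗ[k] G →ₗ[k] H) (θ1 : G →ₗ[k] G →ₗ[k] H →ₗ[k] H)
    (ρ1 : G →ₗ[k] H →ₗ[k] H →ₗ[k] H)
    (ω2 : G →ₗ[k] G →ₗ[k] G →ₗ[k] H) (θ2 : G →ₗ[k] G →ₗ[k] H →ₗ[k] H)
    (ρ2 : G →ₗ[k] H →ₗ[k] H →ₗ[k] H)
    (φ : G →ₗ[k] H)
    (hequiv : CocycleEquiv (fun x y z => Lg.t x y z) (fun a b c => Lh.t a b c)
      (fun x y z => ω1 x y z) (fun x y a => θ1 x y a) (fun x a b => ρ1 x a b)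
      (fun x y z => ω2 x y z) (fun x y a => θ2 x y a) (fun x a b => ρ2 x a b)
      (fun x => φ x)) :
    ∀ B1 B2 : G × H → G × H → G × H → G × H,
      B1 = nabBr (fun x y z => Lg.t x y z) (fun a b c => Lh.t a b c)
        (fun x y z => ω1 x y z) (fun x y a => θ1 x y a) (fun x a b => ρ1 x a b) →
      B2 = nabBr (fun x y z => Lg.t x y z) (fun a b c => Lh.t a b c)
        (fun x y z => ω2 x y z) (fun x y a => θ2 x y a) (fun x a b => ρ2 x a b) →
      ∀ f : G × H → G × H, f = (fun q => (q.1, q.2 - φ q.1)) →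
        Function.Bijective f ∧
        (∀ q r u, f (B1 q r u) = B2 (f q) (f r) (f u)) ∧
        (∀ a : H, f (0, a) = (0, a)) ∧
        (∀ q, (f q).1 = q.1) := by
  rintro B1 B2 rfl rfl f rfl
  exact ⟨shear_bijective φ, shear_nabBr _ Lh _ _ _ _ _ _ φ hequiv,
    fun a => by simp, fun q => rfl⟩

/-- if two non-abelian 3-cocycles are equivalent via `φ`, then
`f(x+a) = x - φ(x) + a` is an isomorphism of Lie triple systems from
`(g ⊕ h, [.,.,.]_{(ω₁,θ₁,ρ₁)})` to `(g ⊕ h, [.,.,.]_{(ω₂,θ₂,ρ₂)})` commuting with the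
inclusion of `h` and the projection onto `g`. -/
theorem statement7 {k G H : Type*} [Field k] [AddCommGroup G] [Module k G]
    [AddCommGroup H] [Module k H]
    (Lg : LTS k G) (Lh : LTS k H)
    (ω1 : G →ₗ[k] G →ₗ[k] G →ₗ[k] H) (θ1 : G →ₗ[k] G →ₗ[k] H →ₗ[k] H)
    (ρ1 : G →ₗ[k] H →ₗ[k] H →ₗ[k] H)
    (ω2 : G →ₗ[k] G →ₗ[k] G →ₗ[k] H) (θ2 : G →ₗ[k] G →ₗ[k] H →ₗ[k] H)
    (ρ2 : G →ₗ[k] H →ₗ[k] H →ₗ[k] H)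
    (hcoc1 : IsNACocycle (fun x y z => Lg.t x y z) (fun a b c => Lh.t a b c)
      (fun x y z => ω1 x y z) (fun x y a => θ1 x y a) (fun x a b => ρ1 x a b))
    (hcoc2 : IsNACocycle (fun x y z => Lg.t x y z) (fun a b c => Lh.t a b c)
      (fun x y z => ω2 x y z) (fun x y a => θ2 x y a) (fun x a b => ρ2 x a b))
    (φ : G →ₗ[k] H)
    (hequiv : CocycleEquiv (fun x y z => Lg.t x y z) (fun a b c => Lh.t a b c)
      (fun x y z => ω1 x y z) (fun x y a => θ1 x y a) (fun x a b => ρ1 x a b)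
      (fun x y z => ω2 x y z) (fun x y a => θ2 x y a) (fun x a b => ρ2 x a b)
      (fun x => φ x)) :
    ∀ B1 B2 : G × H → G × H → G × H → G × H,
      B1 = nabBr (fun x y z => Lg.t x y z) (fun a b c => Lh.t a b c)
        (fun x y z => ω1 x y z) (fun x y a => θ1 x y a) (fun x a b => ρ1 x a b) →
      B2 = nabBr (fun x y z => Lg.t x y z) (fun a b c => Lh.t a b c)
        (fun x y z => ω2 x y z) (fun x y a => θ2 x y a) (fun x a b => ρ2 x a b) →
      ∀ f : G × H → G × H, f = (fun q => (q.1, q.2 - φ q.1)) →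
        Function.Bijective f ∧
        (∀ q r u, f (B1 q r u) = B2 (f q) (f r) (f u)) ∧
        (∀ a : H, f (0, a) = (0, a)) ∧
        (∀ q, (f q).1 = q.1) :=
  statement7_general Lg Lh ω1 θ1 ρ1 ω2 θ2 ρ2 φ hequiv
end

section
/- Let 0→h→ĝ→g→0 be a non-abelian extension of Lie triple systems and γ ∈ Aut_h(ĝ). Then the map γ̄: g→g defined by γ̄(x) = p(γ(s(x))) for a section s of p is independent of the choice of section, and γ̄ is an automorphism of the Lie triple system g. -/
universe u v w

/-! The map `x ↦ p (γ (s x))` is well defined and bijective as soon as `γ` preserves `ker p`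
in both directions: then `p (γ e)` depends only on `p e`, and determines it. -/

theorem LinearEquiv.apply_mem_iff_of_map_eq {k E : Type*} [Semiring k] [AddCommMonoid E]
    [Module k E] (γ : E ≃ₗ[k] E) {N : Submodule k E} (hN : N.map (γ : E →ₗ[k] E) = N) (e : E) :
    γ e ∈ N ↔ e ∈ N := by
  conv_lhs => rw [← hN]
  rw [Submodule.mem_map_equiv, LinearEquiv.symm_apply_apply]

section InducedMap

variable {k E G : Type*} [Ring k] [AddCommGroup E] [Module k E] [AddCommGroup G] [Module k G]
  {p : E →ₗ[k] G} {γ : E →ₗ[k] E}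

theorem apply_apply_eq_iff_of_ker (hγ : ∀ e, p (γ e) = 0 ↔ p e = 0) (e e' : E) :
    p (γ e) = p (γ e') ↔ p e = p e' := by
  rw [← sub_eq_zero, ← map_sub, ← map_sub, hγ, map_sub, sub_eq_zero]

theorem apply_apply_section_eq (hγ : ∀ e, p (γ e) = 0 ↔ p e = 0) {s₁ s₂ : G → E}
    (hs₁ : ∀ x, p (s₁ x) = x) (hs₂ : ∀ x, p (s₂ x) = x) (x : G) :
    p (γ (s₁ x)) = p (γ (s₂ x)) :=
  (apply_apply_eq_iff_of_ker hγ _ _).mpr ((hs₁ x).trans (hs₂ x).symm)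

theorem injective_apply_apply_section (hγ : ∀ e, p (γ e) = 0 ↔ p e = 0) {s : G → E}
    (hs : ∀ x, p (s x) = x) : Function.Injective fun x => p (γ (s x)) := by
  intro x y hxy
  simpa only [hs] using (apply_apply_eq_iff_of_ker hγ _ _).mp hxy

theorem surjective_apply_apply_section (hp : Function.Surjective p)
    (hγsurj : Function.Surjective γ) (hγ : ∀ e, p (γ e) = 0 ↔ p e = 0) {s : G → E}
    (hs : ∀ x, p (s x) = x) : Function.Surjective fun x => p (γ (s x)) := by
  intro y
  obtain ⟨e, rfl⟩ := hp.comp hγsurj y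
  exact ⟨p e, (apply_apply_eq_iff_of_ker hγ _ _).mpr (hs (p e))⟩

theorem apply_apply_section_map₃ (hγ : ∀ e, p (γ e) = 0 ↔ p e = 0)
    {tE : E → E → E → E} {tG : G → G → G → G}
    (hp : ∀ a b c, p (tE a b c) = tG (p a) (p b) (p c))
    (hγt : ∀ a b c, γ (tE a b c) = tE (γ a) (γ b) (γ c)) {s : G → E}
    (hs : ∀ x, p (s x) = x) (x y z : G) :
    p (γ (s (tG x y z))) = tG (p (γ (s x))) (p (γ (s y))) (p (γ (s z))) := by
  calc p (γ (s (tG x y z))) = p (γ (tE (s x) (s y) (s z))) :=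
        (apply_apply_eq_iff_of_ker hγ _ _).mpr (by rw [hp, hs, hs, hs, hs])
    _ = tG (p (γ (s x))) (p (γ (s y))) (p (γ (s z))) := by rw [hγt, hp]

end InducedMap

theorem statement12_general {k G H E : Type*} [Field k] [AddCommGroup G] [Module k G]
    [AddCommGroup H] [Module k H] [AddCommGroup E] [Module k E]
    (Lg : LTS k G) (LE : LTS k E)
    (i : H →ₗ[k] E) (p : E →ₗ[k] G)
    (phom : ∀ x y z, p (LE.t x y z) = Lg.t (p x) (p y) (p z))
    (psurj : Function.Surjective p)
    (hexact : LinearMap.range i = LinearMap.ker p)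
    (γ : E ≃ₗ[k] E)
    (γhom : ∀ x y z, γ (LE.t x y z) = LE.t (γ x) (γ y) (γ z))
    (γh : Submodule.map (γ : E →ₗ[k] E) (LinearMap.range i) = LinearMap.range i) :
    (∀ s1 s2 : G →ₗ[k] E, (∀ x, p (s1 x) = x) → (∀ x, p (s2 x) = x) →
      ∀ x, p (γ (s1 x)) = p (γ (s2 x))) ∧
    (∀ s : G →ₗ[k] E, (∀ x, p (s x) = x) →
      Function.Bijective (fun x => p (γ (s x))) ∧
      (∀ x y z, p (γ (s (Lg.t x y z))) =
        Lg.t (p (γ (s x))) (p (γ (s y))) (p (γ (s z))))) := by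
  have hker : ∀ e, p (γ e) = 0 ↔ p e = 0 := by
    simpa only [hexact, LinearMap.mem_ker] using γ.apply_mem_iff_of_map_eq γh
  exact ⟨fun s1 s2 hs1 hs2 => apply_apply_section_eq hker hs1 hs2, fun s hs =>
    ⟨⟨injective_apply_apply_section hker hs,
        surjective_apply_apply_section psurj γ.surjective hker hs⟩,
      apply_apply_section_map₃ hker (tE := (LE.t · · ·)) (tG := (Lg.t · · ·)) phom γhom hs⟩⟩

/-- for `γ ∈ Aut_h(ĝ)`, the map `γ̄(x) = p (γ (s x))` does not depend on the
choice of section `s` of `p`, and for any section it is an automorphism of the Lie triple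
system `g`. -/
theorem statement12 {k G H E : Type*} [Field k] [AddCommGroup G] [Module k G]
    [AddCommGroup H] [Module k H] [AddCommGroup E] [Module k E]
    (Lg : LTS k G) (Lh : LTS k H) (LE : LTS k E)
    (i : H →ₗ[k] E) (p : E →ₗ[k] G)
    (ihom : ∀ a b c, i (Lh.t a b c) = LE.t (i a) (i b) (i c))
    (phom : ∀ x y z, p (LE.t x y z) = Lg.t (p x) (p y) (p z))
    (iinj : Function.Injective i) (psurj : Function.Surjective p)
    (hexact : LinearMap.range i = LinearMap.ker p)
    (γ : E ≃ₗ[k] E)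
    (γhom : ∀ x y z, γ (LE.t x y z) = LE.t (γ x) (γ y) (γ z))
    (γh : Submodule.map (γ : E →ₗ[k] E) (LinearMap.range i) = LinearMap.range i) :
    (∀ s1 s2 : G →ₗ[k] E, (∀ x, p (s1 x) = x) → (∀ x, p (s2 x) = x) →
      ∀ x, p (γ (s1 x)) = p (γ (s2 x))) ∧
    (∀ s : G →ₗ[k] E, (∀ x, p (s x) = x) →
      Function.Bijective (fun x => p (γ (s x))) ∧
      (∀ x y z, p (γ (s (Lg.t x y z))) =
        Lg.t (p (γ (s x))) (p (γ (s y))) (p (γ (s z))))) :=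
  statement12_general Lg LE i p phom psurj hexact γ γhom γh
end

section
/- Let 0→h→ĝ→g→0 be a non-abelian extension of Lie triple systems with section s and associated non-abelian 3-cocycle (ω,θ,ρ). A pair (α,β) ∈ Aut(g)×Aut(h) is inducible (i.e., lies in the image of λ: Aut_h(ĝ)→Aut(g)×Aut(h)) if and only if there exists a linear map φ: g→h satisfying: (i) β(θ(x,y)a) − θ(α(x),α(y))β(a) = [β(a),φ(x),φ(y)]_h − D_ρ(α(y))(β(a),φ(x)) + ρ(α(x))(β(a),φ(y)); (ii) β(ρ(x)(a,b)) − ρ(α(x))(β(a),β(b)) = [β(a),φ(x),β(b)]_h; (iii) βω(x,y,z) − ω(α(x),α(y),α(z)) = D_ρ(α(z))(φ(x),φ(y)) − ρ(α(y))(φ(x),φ(z)) − θ(α(y),α(z))φ(x) + ρ(α(x))(φ(y),φ(z)) + θ(α(x),α(z))φ(y) − D_θ(α(x),α(y))φ(z) + φ([x,y,z]_g) − [φ(x),φ(y),φ(z)]_h, for all x,y,z∈g, a,b∈h. -/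
universe u v w

/-- a pair `(α,β) ∈ Aut(g) × Aut(h)` is inducible (lies in the image of `λ`)
if and only if there is a linear map `φ : g → h` satisfying conditions (i)–(iii). -/
theorem statement14 {k G H E : Type*} [Field k] [AddCommGroup G] [Module k G]
    [AddCommGroup H] [Module k H] [AddCommGroup E] [Module k E]
    (Lg : LTS k G) (Lh : LTS k H) (LE : LTS k E)
    (i : H →ₗ[k] E) (p : E →ₗ[k] G)
    (ihom : ∀ a b c, i (Lh.t a b c) = LE.t (i a) (i b) (i c))
    (phom : ∀ x y z, p (LE.t x y z) = Lg.t (p x) (p y) (p z))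
    (iinj : Function.Injective i) (psurj : Function.Surjective p)
    (hexact : LinearMap.range i = LinearMap.ker p)
    (s : G →ₗ[k] E) (hs : ∀ x, p (s x) = x)
    (ω : G → G → G → H) (θ : G → G → H → H) (ρ : G → H → H → H)
    (hω : ∀ x y z, i (ω x y z) = LE.t (s x) (s y) (s z) - s (Lg.t x y z))
    (hθ : ∀ x y a, i (θ x y a) = LE.t (i a) (s x) (s y))
    (hρ : ∀ x a b, i (ρ x a b) = LE.t (s x) (i a) (i b))
    (α : G ≃ₗ[k] G) (β : H ≃ₗ[k] H)
    (αhom : ∀ x y z, α (Lg.t x y z) = Lg.t (α x) (α y) (α z))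
    (βhom : ∀ a b c, β (Lh.t a b c) = Lh.t (β a) (β b) (β c)) :
    (∃ γ : E ≃ₗ[k] E,
      (∀ x y z, γ (LE.t x y z) = LE.t (γ x) (γ y) (γ z)) ∧
      (∀ a, γ (i a) = i (β a)) ∧
      (∀ x, p (γ (s x)) = α x)) ↔
    (∃ φ : G →ₗ[k] H,
      (∀ x y a,
        β (θ x y a) - θ (α x) (α y) (β a) =
          Lh.t (β a) (φ x) (φ y) - Drho ρ (α y) (β a) (φ x)
            + ρ (α x) (β a) (φ y)) ∧
      (∀ x a b,
        β (ρ x a b) - ρ (α x) (β a) (β b) = Lh.t (β a) (φ x) (β b)) ∧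
      (∀ x y z,
        β (ω x y z) - ω (α x) (α y) (α z) =
          Drho ρ (α z) (φ x) (φ y) - ρ (α y) (φ x) (φ z) - θ (α y) (α z) (φ x)
            + ρ (α x) (φ y) (φ z) + θ (α x) (α z) (φ y)
            - Dmap θ (α x) (α y) (φ z)
            + φ (Lg.t x y z) - Lh.t (φ x) (φ y) (φ z))) := by

  classical
  have hpi : ∀ a : H, p (i a) = 0 := by
    intro a
    have h : i a ∈ LinearMap.ker p := hexact ▸ LinearMap.mem_range_self i a
    exact h
  have tEskew : ∀ u v w : E, LE.t u v w = - LE.t v u w := by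
    intro u v w
    have h := LE.alt (u + v) w
    simp only [map_add, LinearMap.add_apply, LE.alt, zero_add, add_zero] at h
    exact eq_neg_of_add_eq_zero_right h
  have tEflip : ∀ u v w : E, LE.t u v w = LE.t w v u - LE.t w u v := by
    intro u v w
    have h := LE.cyc u v w
    rw [tEskew v w u] at h
    have h2 : LE.t u v w - (LE.t w v u - LE.t w u v) = 0 := by rw [← h]; abel
    exact sub_eq_zero.mp h2
  have tHskew : ∀ u v w : H, Lh.t u v w = - Lh.t v u w := by
    intro u v w
    have h := Lh.alt (u + v) w
    simp only [map_add, LinearMap.add_apply, Lh.alt, zero_add, add_zero] at h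
    exact eq_neg_of_add_eq_zero_right h
  have tHflip : ∀ u v w : H, Lh.t u v w = Lh.t w v u - Lh.t w u v := by
    intro u v w
    have h := Lh.cyc u v w
    rw [tHskew v w u] at h
    have h2 : Lh.t u v w - (Lh.t w v u - Lh.t w u v) = 0 := by rw [← h]; abel
    exact sub_eq_zero.mp h2
  have θsub : ∀ u v (a b : H), θ u v (a - b) = θ u v a - θ u v b := by
    intro u v a b
    apply iinj
    simp only [map_sub, hθ, LinearMap.sub_apply]
  have ρsub : ∀ u (a b c d : H),
      ρ u (a - b) (c - d) = ρ u a c - ρ u a d - ρ u b c + ρ u b d := by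
    intro u a b c d
    apply iinj
    simp only [map_sub, map_add, hρ, LinearMap.sub_apply, LinearMap.add_apply]
    abel
  have θneg : ∀ u v (a : H), θ u v (-a) = - θ u v a := by
    intro u v a
    apply iinj
    simp only [map_neg, hθ, LinearMap.neg_apply]
  have ρneg2 : ∀ u (a b : H), ρ u (-a) (-b) = ρ u a b := by
    intro u a b
    apply iinj
    simp only [map_neg, hρ, LinearMap.neg_apply, neg_neg]
  have brE : ∀ x y z (a b c : H),
      LE.t (s x + i a) (s y + i b) (s z + i c) =
        s (Lg.t x y z) + i (ω x y z + Dmap θ x y c + θ y z a - θ x z b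
          + Drho ρ z a b + ρ x b c - ρ y a c + Lh.t a b c) := by
    intro x y z a b c
    have e1 : LE.t (s x) (s y) (s z) = i (ω x y z) + s (Lg.t x y z) := by
      rw [hω]; abel
    have e2 : LE.t (s x) (s y) (i c) = i (Dmap θ x y c) := by
      rw [tEflip, ← hθ, ← hθ]
      simp only [Dmap, map_sub]
    have e3 : LE.t (i a) (s y) (s z) = i (θ y z a) := (hθ y z a).symm
    have e4 : LE.t (s x) (i b) (s z) = - i (θ x z b) := by
      rw [tEskew, ← hθ]
    have e5 : LE.t (i a) (i b) (s z) = i (Drho ρ z a b) := by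
      rw [tEflip, ← hρ, ← hρ]
      simp only [Drho, map_sub]
    have e6 : LE.t (s x) (i b) (i c) = i (ρ x b c) := (hρ x b c).symm
    have e7 : LE.t (i a) (s y) (i c) = - i (ρ y a c) := by
      rw [tEskew, ← hρ]
    have e8 : LE.t (i a) (i b) (i c) = i (Lh.t a b c) := (ihom a b c).symm
    simp only [map_add, LinearMap.add_apply, e1, e2, e3, e4, e5, e6, e7, e8,
      map_sub]
    abel
  constructor
  · rintro ⟨γ, γhom, γi, γp⟩
    have hmem : ∀ x, (s ∘ₗ (α : G →ₗ[k] G) - γ.toLinearMap ∘ₗ s) x ∈ LinearMap.range i := by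
      intro x
      rw [hexact, LinearMap.mem_ker]
      simp only [LinearMap.sub_apply, LinearMap.comp_apply, LinearEquiv.coe_coe,
        map_sub, hs, γp]
      simp
    let φ : G →ₗ[k] H := (LinearEquiv.ofInjective i iinj).symm.toLinearMap ∘ₗ
      LinearMap.codRestrict (LinearMap.range i)
        (s ∘ₗ (α : G →ₗ[k] G) - γ.toLinearMap ∘ₗ s) hmem
    have hiφ : ∀ x, i (φ x) = s (α x) - γ (s x) := by
      intro x
      show i ((LinearEquiv.ofInjective i iinj).symm _) = _
      rw [← LinearEquiv.ofInjective_apply i (h := iinj), LinearEquiv.apply_symm_apply]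
      simp
    have γs : ∀ w, γ (s w) = s (α w) - i (φ w) := by
      intro w; rw [hiφ]; abel
    refine ⟨φ, ?_, ?_, ?_⟩
    · intro x y a
      apply iinj
      simp only [map_sub, map_add, Drho]
      rw [← γi (θ x y a), hθ x y a, γhom, γi, γs x, γs y,
        hθ (α x) (α y) (β a), ihom]
      simp only [hρ]
      simp only [map_sub, LinearMap.sub_apply]
      rw [tEskew (i (β a)) (s (α x)) (i (φ y)),
        tEflip (i (β a)) (i (φ x)) (s (α y))]
      abel
    · intro x a b
      apply iinj
      simp only [map_sub]
      rw [← γi (ρ x a b), hρ x a b, γhom, γi, γi, γs x,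
        hρ (α x) (β a) (β b), ihom]
      simp only [map_sub, LinearMap.sub_apply]
      rw [tEskew (i (φ x)) (i (β a)) (i (β b))]
      abel
    · intro x y z
      apply iinj
      simp only [map_sub, map_add, Drho, Dmap]
      rw [← γi (ω x y z), hω x y z, map_sub, γhom, γs x, γs y, γs z,
        γs (Lg.t x y z), αhom, hω (α x) (α y) (α z)]
      simp only [hθ, hρ, ihom]
      simp only [map_sub, LinearMap.sub_apply]
      rw [tEskew (s (α x)) (i (φ y)) (s (α z)),
        tEflip (i (φ x)) (i (φ y)) (s (α z)),
        tEflip (s (α x)) (s (α y)) (i (φ z)),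
        tEskew (i (φ x)) (s (α y)) (i (φ z))]
      abel
  · rintro ⟨φ, h1, h2, h3⟩
    -- the projection q : E → H
    have hrmem : ∀ e, ((LinearMap.id : E →ₗ[k] E) - s ∘ₗ p) e ∈ LinearMap.range i := by
      intro e
      rw [hexact, LinearMap.mem_ker]
      simp [hs]
    let q : E →ₗ[k] H := (LinearEquiv.ofInjective i iinj).symm.toLinearMap ∘ₗ
      LinearMap.codRestrict (LinearMap.range i) ((LinearMap.id : E →ₗ[k] E) - s ∘ₗ p) hrmem
    have hiq : ∀ e, i (q e) = e - s (p e) := by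
      intro e
      show i ((LinearEquiv.ofInjective i iinj).symm _) = _
      rw [← LinearEquiv.ofInjective_apply i (h := iinj), LinearEquiv.apply_symm_apply]
      simp
    have hqi : ∀ a, q (i a) = a := by
      intro a
      apply iinj
      rw [hiq]
      simp [hpi]
    have hqs : ∀ x, q (s x) = 0 := by
      intro x
      apply iinj
      rw [hiq, hs]
      simp
    have hdecomp : ∀ e, s (p e) + i (q e) = e := by
      intro e; rw [hiq]; abel
    -- the two linear maps
    let γ1 : E →ₗ[k] E := (s ∘ₗ ((α : G →ₗ[k] G) ∘ₗ p)) +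
      (i ∘ₗ ((β : H →ₗ[k] H) ∘ₗ q - φ ∘ₗ p))
    let γ2 : E →ₗ[k] E := (s ∘ₗ ((α.symm : G →ₗ[k] G) ∘ₗ p)) +
      (i ∘ₗ ((β.symm : H →ₗ[k] H) ∘ₗ q +
        ((β.symm : H →ₗ[k] H) ∘ₗ φ ∘ₗ (α.symm : G →ₗ[k] G)) ∘ₗ p))
    have hγ1 : ∀ e, γ1 e = s (α (p e)) + i (β (q e) - φ (p e)) := fun e => rfl
    have hγ2 : ∀ e, γ2 e = s (α.symm (p e)) +
        i (β.symm (q e) + β.symm (φ (α.symm (p e)))) := fun e => rfl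
    have pγ1 : ∀ e, p (γ1 e) = α (p e) := by
      intro e; rw [hγ1]; simp [hs, hpi]
    have qγ1 : ∀ e, q (γ1 e) = β (q e) - φ (p e) := by
      intro e; rw [hγ1]; simp [hqs, hqi]
    have pγ2 : ∀ e, p (γ2 e) = α.symm (p e) := by
      intro e; rw [hγ2]; simp [hs, hpi]
    have qγ2 : ∀ e, q (γ2 e) = β.symm (q e) + β.symm (φ (α.symm (p e))) := by
      intro e; rw [hγ2]; simp [hqs, hqi]
    have h21 : ∀ e, γ2 (γ1 e) = e := by
      intro e
      rw [hγ2, pγ1, qγ1, LinearEquiv.symm_apply_apply, map_sub,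
        LinearEquiv.symm_apply_apply]
      rw [show q e - β.symm (φ (p e)) + β.symm (φ (p e)) = q e by abel]
      exact hdecomp e
    have h12 : ∀ e, γ1 (γ2 e) = e := by
      intro e
      rw [hγ1, pγ2, qγ2, LinearEquiv.apply_symm_apply, map_add,
        LinearEquiv.apply_symm_apply, LinearEquiv.apply_symm_apply]
      rw [show q e + φ (α.symm (p e)) - φ (α.symm (p e)) = q e by abel]
      exact hdecomp e
    refine ⟨LinearEquiv.ofLinear γ1 γ2 (LinearMap.ext h12) (LinearMap.ext h21),
      ?_, ?_, ?_⟩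
    · intro u v w
      simp only [LinearEquiv.ofLinear_apply]
      obtain ⟨x, a, rfl⟩ : ∃ x a, u = s x + i a := ⟨p u, q u, (hdecomp u).symm⟩
      obtain ⟨y, b, rfl⟩ : ∃ y b, v = s y + i b := ⟨p v, q v, (hdecomp v).symm⟩
      obtain ⟨z, c, rfl⟩ : ∃ z c, w = s z + i c := ⟨p w, q w, (hdecomp w).symm⟩
      have hγs : ∀ x (a : H), γ1 (s x + i a) = s (α x) + i (β a - φ x) := by
        intro x a
        rw [hγ1]
        simp [hqs, hqi, hs, hpi]
      rw [brE, hγs, hγs x a, hγs y b, hγs z c, brE, αhom]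
      congr 1
      congr 1
      have h1' : ∀ x y a, β (θ x y a) = θ (α x) (α y) (β a) +
          (Lh.t (β a) (φ x) (φ y) - Drho ρ (α y) (β a) (φ x)
            + ρ (α x) (β a) (φ y)) := by
        intro x y a
        rw [← h1 x y a]; abel
      have h2' : ∀ x a b, β (ρ x a b) = ρ (α x) (β a) (β b)
          + Lh.t (β a) (φ x) (β b) := by
        intro x a b
        rw [← h2 x a b]; abel
      have h3' : ∀ x y z, β (ω x y z) = ω (α x) (α y) (α z) +
          (Drho ρ (α z) (φ x) (φ y) - ρ (α y) (φ x) (φ z) - θ (α y) (α z) (φ x)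
            + ρ (α x) (φ y) (φ z) + θ (α x) (α z) (φ y)
            - Dmap θ (α x) (α y) (φ z)
            + φ (Lg.t x y z) - Lh.t (φ x) (φ y) (φ z)) := by
        intro x y z
        rw [← h3 x y z]; abel
      simp only [Dmap, Drho, map_add, map_sub]
      simp only [h1', h2', h3', βhom]
      simp only [Dmap, Drho, θsub, ρsub, map_sub, LinearMap.sub_apply]
      rw [tHskew (φ x) (β b) (β c), tHskew (φ x) (β b) (φ z),
        tHflip (φ x) (φ y) (β c), tHflip (β b) (φ z) (β a)]
      abel
    · intro a
      simp only [LinearEquiv.ofLinear_apply]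
      rw [hγ1]
      simp [hqi, hpi]
    · intro x
      simp only [LinearEquiv.ofLinear_apply, pγ1, hs]
end
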